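/- For λ′, λ″ ∈ ℂ with Im λ′ > 0 and Im λ″ > 0, define M(λ′, λ″) = Ran((Γ(A + λ′)^{-1})*) ∪ Ran((Γ_*(A* − λ″)^{-1})*) ⊆ H. Then the closed subspace closure[ span{ (A − μ)^{-1}x : Im μ < 0, x ∈ M(λ′, λ″) } + span{ (A* − λ)^{-1}x : Im λ > 0, x ∈ M(λ′, λ″) } ] is independent of the choice of λ′ and λ″; in particular it equals the same subspace formed with λ′ = λ″ = i. -/

import Mathlib

/-! Let `N` be the subspace built from `(λ', λ'')`. Products of two resolvents of `A` and
`A*` reduce to single resolvents: for two resolvents of the same operator by the resolvent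
identity (the diagonal case as a limit), for mixed products by the Lagrange identities, at the
cost of a term in the range of `(Γ (A - z)⁻¹)*` or `(Γ_* (A* - w)⁻¹)*`. Those ranges lie in `N`:
changing `z` or `w` adds a resolvent of an element of `M(λ', λ'')`, and `M(λ', λ'') ⊆ N`
because `-z (A* - z)⁻¹ → 1` strongly as `z → i∞`. So `N` is a closed subspace invariant under
all resolvents and containing every `M(κ', κ'')`; it therefore contains the subspace built
from `(κ', κ'')`, and the roles of the two pairs can be exchanged. -/

open scoped ComplexInnerProductSpace

noncomputable section

/-- A maximal dissipative operator on a complex Hilbert space `H`, together with the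
(derivable) data of its resolvent on the open lower half-plane and the resolvent of its
adjoint on the open upper half-plane.  Here the inner product `⟪·,·⟫` is conjugate-linear
in the first variable, so that the paper's `⟨x, y⟩` corresponds to `⟪y, x⟫`. -/
structure MDO (H : Type*) [NormedAddCommGroup H] [InnerProductSpace ℂ H]
    [CompleteSpace H] where
  /-- The underlying densely defined operator. -/
  A : H →ₗ.[ℂ] H
  dense_dom : Dense (A.domain : Set H)
  dissipative : ∀ u : A.domain, 0 ≤ (⟪(u : H), A u⟫).im
  /-- `R z` is the bounded inverse `(A - z)⁻¹`, for `Im z < 0`. -/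
  R : ℂ → H →L[ℂ] H
  R_mem : ∀ z, z.im < 0 → ∀ h : H, R z h ∈ A.domain
  R_right : ∀ z (hz : z.im < 0) (h : H), A ⟨R z h, R_mem z hz h⟩ - z • R z h = h
  R_left : ∀ z, z.im < 0 → ∀ u : A.domain, R z (A u - z • (u : H)) = (u : H)
  dense_dom_star : Dense (A.adjoint.domain : Set H)
  anti_dissipative_star : ∀ u : A.adjoint.domain, (⟪(u : H), A.adjoint u⟫).im ≤ 0
  /-- `Rs z` is the bounded inverse `(A* - z)⁻¹`, for `Im z > 0`. -/
  Rs : ℂ → H →L[ℂ] H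
  Rs_mem : ∀ z, 0 < z.im → ∀ h : H, Rs z h ∈ A.adjoint.domain
  Rs_right : ∀ z (hz : 0 < z.im) (h : H),
    A.adjoint ⟨Rs z h, Rs_mem z hz h⟩ - z • Rs z h = h
  Rs_left : ∀ z, 0 < z.im → ∀ u : A.adjoint.domain,
    Rs z (A.adjoint u - z • (u : H)) = (u : H)

/-- A maximal dissipative operator together with boundary operators `Γ`, `Γ_*` satisfying
the abstract Lagrange identities, and the bounded compositions `ΓR z = Γ ∘ (A - z)⁻¹`
(for `Im z < 0`) and `ΓsRs z = Γ_* ∘ (A* - z)⁻¹` (for `Im z > 0`). -/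
structure StrausSetting (H E Es : Type*)
    [NormedAddCommGroup H] [InnerProductSpace ℂ H] [CompleteSpace H]
    [NormedAddCommGroup E] [InnerProductSpace ℂ E] [CompleteSpace E]
    [NormedAddCommGroup Es] [InnerProductSpace ℂ Es] [CompleteSpace Es]
    extends MDO H where
  Γ : A.domain →ₗ[ℂ] E
  Γ_bdd : ∃ C : ℝ, ∀ u : A.domain, ‖Γ u‖ ≤ C * (‖(u : H)‖ + ‖A u‖)
  Γ_dense : DenseRange Γ
  lagrange : ∀ u v : A.domain,
    ⟪(v : H), A u⟫ - ⟪A v, (u : H)⟫ = Complex.I * ⟪Γ v, Γ u⟫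
  Γs : A.adjoint.domain →ₗ[ℂ] Es
  Γs_bdd : ∃ C : ℝ, ∀ u : A.adjoint.domain,
    ‖Γs u‖ ≤ C * (‖(u : H)‖ + ‖A.adjoint u‖)
  Γs_dense : DenseRange Γs
  lagrange_star : ∀ u v : A.adjoint.domain,
    ⟪(v : H), A.adjoint u⟫ - ⟪A.adjoint v, (u : H)⟫ = -Complex.I * ⟪Γs v, Γs u⟫
  /-- `ΓR z = Γ ∘ (A - z)⁻¹` as a bounded operator `H →L[ℂ] E`, for `Im z < 0`. -/
  ΓR : ℂ → H →L[ℂ] E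
  ΓR_spec : ∀ z (hz : z.im < 0) (h : H), ΓR z h = Γ ⟨R z h, R_mem z hz h⟩
  /-- `ΓsRs z = Γ_* ∘ (A* - z)⁻¹` as a bounded operator `H →L[ℂ] Es`, for `Im z > 0`. -/
  ΓsRs : ℂ → H →L[ℂ] Es
  ΓsRs_spec : ∀ z (hz : 0 < z.im) (h : H), ΓsRs z h = Γs ⟨Rs z h, Rs_mem z hz h⟩

variable {H E Es : Type*}
    [NormedAddCommGroup H] [InnerProductSpace ℂ H] [CompleteSpace H]
    [NormedAddCommGroup E] [InnerProductSpace ℂ E] [CompleteSpace E]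
    [NormedAddCommGroup Es] [InnerProductSpace ℂ Es] [CompleteSpace Es]

/-- The set `M(λ', λ'') = Ran((Γ(A + λ')⁻¹)*) ∪ Ran((Γ_*(A* - λ'')⁻¹)*) ⊆ H`,
for `Im λ' > 0` and `Im λ'' > 0`. -/
def StrausSetting.MSet (M : StrausSetting H E Es) (l1 l2 : ℂ) : Set H :=
  Set.range (ContinuousLinearMap.adjoint (M.ΓR (-l1)))
    ∪ Set.range (ContinuousLinearMap.adjoint (M.ΓsRs l2))

/-- The closure of
`span{(A - μ)⁻¹ x : Im μ < 0, x ∈ M(λ', λ'')} + span{(A* - λ)⁻¹ x : Im λ > 0, x ∈ M(λ', λ'')}`. -/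
noncomputable def StrausSetting.cnsSubspace (M : StrausSetting H E Es) (l1 l2 : ℂ) :
    Submodule ℂ H :=
  (Submodule.span ℂ
    ({y | ∃ (mu : ℂ) (x : H), mu.im < 0 ∧ x ∈ M.MSet l1 l2 ∧ y = M.R mu x}
      ∪ {y | ∃ (lam : ℂ) (x : H), 0 < lam.im ∧ x ∈ M.MSet l1 l2 ∧
          y = M.Rs lam x})).topologicalClosure

open ContinuousLinearMap Filter Topology ComplexConjugate

section ResolventFamily

variable {V : Type*} [NormedAddCommGroup V] [NormedSpace ℂ V]

theorem apply_mem_of_mem_topologicalClosure_span {W : Type*} [NormedAddCommGroup W]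
    [NormedSpace ℂ W] {s : Set V} {N : Submodule ℂ W} (hN : IsClosed (N : Set W))
    (T : V →L[ℂ] W) (hs : ∀ x ∈ s, T x ∈ N) {y : V}
    (hy : y ∈ (Submodule.span ℂ s).topologicalClosure) : T y ∈ N :=
  Submodule.topologicalClosure_minimal _
    (Submodule.span_le.mpr hs : Submodule.span ℂ s ≤ N.comap (T : V →ₗ[ℂ] W))
    (hN.preimage T.continuous) hy

variable {U : Set ℂ} {T : ℂ → V →L[ℂ] V}

theorem tendsto_apply_of_resolvent_identity
    (hU : IsOpen U)
    (hres : ∀ z ∈ U, ∀ w ∈ U, ∀ h, T z h - T w h = (z - w) • T z (T w h))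
    (hbound : ∀ z ∈ U, ∀ h, |z.im| * ‖T z h‖ ≤ ‖h‖) {z : ℂ} (hz : z ∈ U)
    (hz0 : z.im ≠ 0)
    (y : V) : Tendsto (fun w => T w y) (𝓝 z) (𝓝 (T z y)) := by
  rw [tendsto_iff_norm_sub_tendsto_zero]
  have hlim : Tendsto (fun w : ℂ => ‖w - z‖ * ‖T z y‖ / |w.im|) (𝓝 z) (𝓝 0) := by
    have : ContinuousAt (fun w : ℂ => ‖w - z‖ * ‖T z y‖ / |w.im|) z :=
      ContinuousAt.div (by fun_prop) (by fun_prop) (abs_ne_zero.mpr hz0)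
    simpa using this.tendsto
  refine squeeze_zero' (Eventually.of_forall fun _ => norm_nonneg _) ?_ hlim
  have him : ∀ᶠ w in 𝓝 z, w.im ≠ 0 := Complex.continuous_im.continuousAt.eventually_ne hz0
  filter_upwards [hU.mem_nhds hz, him] with w hw hw0
  calc ‖T w y - T z y‖ = ‖w - z‖ * ‖T w (T z y)‖ := by rw [hres w hw z hz, norm_smul]
    _ ≤ ‖w - z‖ * (‖T z y‖ / |w.im|) := by
        gcongr
        rw [le_div_iff₀ (abs_pos.mpr hw0), mul_comm]
        exact hbound w hw _
    _ = ‖w - z‖ * ‖T z y‖ / |w.im| := (mul_div_assoc _ _ _).symm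

/-- The diagonal case `z = w` is reached as a limit of the off-diagonal ones, where the
resolvent identity writes `T z (T w x)` as a difference quotient of `T z x` and `T w x`. -/
theorem apply_apply_mem_of_resolvent_identity
    (hU : IsOpen U)
    (hres : ∀ z ∈ U, ∀ w ∈ U, ∀ h, T z h - T w h = (z - w) • T z (T w h))
    (hbound : ∀ z ∈ U, ∀ h, |z.im| * ‖T z h‖ ≤ ‖h‖) {N : Submodule ℂ V}
    (hN : IsClosed (N : Set V)) {x : V} (hx : ∀ w ∈ U, T w x ∈ N) {z w : ℂ} (hz : z ∈ U)
    (hw : w ∈ U) (hz0 : z.im ≠ 0) : T z (T w x) ∈ N := by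
  have off_diag : ∀ z' ∈ U, z' ≠ w → T z' (T w x) ∈ N := by
    intro z' hz' hne
    have : T z' (T w x) = (z' - w)⁻¹ • (T z' x - T w x) := by
      rw [hres z' hz' w hw, smul_smul, inv_mul_cancel₀ (sub_ne_zero.mpr hne), one_smul]
    rw [this]
    exact N.smul_mem _ (N.sub_mem (hx z' hz') (hx w hw))
  rcases eq_or_ne z w with rfl | hne
  · have hlim := tendsto_apply_of_resolvent_identity hU hres hbound hz hz0 (T z x)
    refine hN.mem_of_tendsto (b := 𝓝[≠] z) (hlim.mono_left nhdsWithin_le_nhds) ?_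
    filter_upwards [eventually_nhdsWithin_of_eventually_nhds (hU.mem_nhds hz),
      self_mem_nhdsWithin] with z' hz' hne using off_diag z' hz' hne
  · exact off_diag z hz hne

end ResolventFamily

theorem abs_im_mul_norm_le_norm_sub_smul {V : Type*} [NormedAddCommGroup V]
    [InnerProductSpace ℂ V] {a u : V} {l : ℂ} (h : l.im * (⟪u, a⟫).im ≤ 0) :
    |l.im| * ‖u‖ ≤ ‖a - l • u‖ := by
  rcases (norm_nonneg u).eq_or_lt with hu | hu
  · rw [← hu, mul_zero]
    exact norm_nonneg _
  have him : (⟪u, a - l • u⟫).im = (⟪u, a⟫).im - l.im * ‖u‖ ^ 2 := by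
    rw [inner_sub_right, inner_smul_right, inner_self_eq_norm_sq_to_K]
    simp [← Complex.ofReal_pow]
  have key : ‖u‖ * (|l.im| * ‖u‖) ≤ ‖u‖ * ‖a - l • u‖ :=
    calc ‖u‖ * (|l.im| * ‖u‖) = |l.im * ‖u‖ ^ 2| := by rw [abs_mul, abs_sq]; ring
      _ ≤ |(⟪u, a - l • u⟫).im| := by
          rw [him]
          apply sq_le_sq.mp
          nlinarith [mul_nonpos_of_nonpos_of_nonneg h (sq_nonneg ‖u‖)]
      _ ≤ ‖⟪u, a - l • u⟫‖ := Complex.abs_im_le_norm _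
      _ ≤ ‖u‖ * ‖a - l • u‖ := norm_inner_le_norm _ _
  exact le_of_mul_le_mul_left key hu

namespace MDO

variable (M : MDO H)

theorem A_R {z : ℂ} (hz : z.im < 0) (h : H) :
    M.A ⟨M.R z h, M.R_mem z hz h⟩ = h + z • M.R z h :=
  eq_add_of_sub_eq (M.R_right z hz h)

theorem A_adjoint_Rs {z : ℂ} (hz : 0 < z.im) (h : H) :
    M.A.adjoint ⟨M.Rs z h, M.Rs_mem z hz h⟩ = h + z • M.Rs z h :=
  eq_add_of_sub_eq (M.Rs_right z hz h)

theorem R_sub_R {z w : ℂ} (hz : z.im < 0) (hw : w.im < 0) (h : H) :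
    M.R z h - M.R w h = (z - w) • M.R z (M.R w h) := by
  have := M.R_left z hz ⟨M.R w h, M.R_mem w hw h⟩
  rw [M.A_R hw] at this
  simp only [map_add, map_sub, map_smul] at this
  linear_combination (norm := module) this

theorem Rs_sub_Rs {z w : ℂ} (hz : 0 < z.im) (hw : 0 < w.im) (h : H) :
    M.Rs z h - M.Rs w h = (z - w) • M.Rs z (M.Rs w h) := by
  have := M.Rs_left z hz ⟨M.Rs w h, M.Rs_mem w hw h⟩
  rw [M.A_adjoint_Rs hw] at this
  simp only [map_add, map_sub, map_smul] at this
  linear_combination (norm := module) this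

theorem adjoint_R {z : ℂ} (hz : z.im < 0) : adjoint (M.R z) = M.Rs (conj z) := by
  have hzc : 0 < (conj z).im := by simpa using hz
  symm
  rw [eq_adjoint_iff]
  intro k h
  have := M.A.adjoint_isFormalAdjoint M.dense_dom ⟨M.Rs (conj z) k, M.Rs_mem _ hzc k⟩
    ⟨M.R z h, M.R_mem z hz h⟩
  rw [M.A_adjoint_Rs hzc, M.A_R hz] at this
  simp only [inner_add_left, inner_add_right, inner_smul_left, inner_smul_right,
    Complex.conj_conj] at this
  linear_combination -this

theorem adjoint_Rs {z : ℂ} (hz : 0 < z.im) : adjoint (M.Rs z) = M.R (conj z) := by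
  rw [← adjoint_adjoint (M.R (conj z)), M.adjoint_R (by simpa using hz), Complex.conj_conj]

theorem abs_im_mul_norm_R_le {z : ℂ} (hz : z.im < 0) (h : H) :
    |z.im| * ‖M.R z h‖ ≤ ‖h‖ := by
  have := abs_im_mul_norm_le_norm_sub_smul (a := M.A ⟨M.R z h, M.R_mem z hz h⟩)
    (mul_nonpos_of_nonpos_of_nonneg hz.le (M.dissipative _))
  rwa [M.R_right z hz] at this

theorem abs_im_mul_norm_Rs_le {z : ℂ} (hz : 0 < z.im) (h : H) :
    |z.im| * ‖M.Rs z h‖ ≤ ‖h‖ := by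
  have := abs_im_mul_norm_le_norm_sub_smul (a := M.A.adjoint ⟨M.Rs z h, M.Rs_mem z hz h⟩)
    (mul_nonpos_of_nonneg_of_nonpos hz.le (M.anti_dissipative_star _))
  rwa [M.Rs_right z hz] at this

theorem norm_Rs_le {z : ℂ} (hz : 0 < z.im) (h : H) : ‖M.Rs z h‖ ≤ ‖h‖ / z.im := by
  rw [le_div_iff₀ hz, mul_comm, ← abs_of_pos hz]
  exact M.abs_im_mul_norm_Rs_le hz h

theorem tendsto_Rs_atTop (a : H) :
    Tendsto (fun n : ℕ => M.Rs ((n + 1 : ℂ) * Complex.I) a) atTop (𝓝 0) := by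
  have hlim : Tendsto (fun n : ℕ => ‖a‖ / ((n : ℝ) + 1)) atTop (𝓝 0) := by
    simpa [div_eq_mul_one_div ‖a‖] using
      (tendsto_one_div_add_atTop_nhds_zero_nat (𝕜 := ℝ)).const_mul ‖a‖
  refine squeeze_zero_norm (fun n => ?_) hlim
  simpa using M.norm_Rs_le (by simp; positivity : 0 < ((n + 1 : ℂ) * Complex.I).im) a

/-- Strong convergence `-z (A* - z)⁻¹ → 1` as `z → i∞`: on `dom A*` it is
`-z (A* - z)⁻¹ u = u - (A* - z)⁻¹ A* u`, and the family is bounded by `1`. -/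
theorem tendsto_neg_smul_Rs (x : H) :
    Tendsto (fun n : ℕ => (-((n + 1 : ℂ) * Complex.I)) • M.Rs ((n + 1 : ℂ) * Complex.I) x)
      atTop (𝓝 x) := by
  set F : ℕ → H →L[ℂ] H :=
    fun n => (-((n + 1 : ℂ) * Complex.I)) • M.Rs ((n + 1 : ℂ) * Complex.I)
  have hpos : ∀ n : ℕ, 0 < ((n + 1 : ℂ) * Complex.I).im := fun n => by simp; positivity
  have hbound : ∃ C, ∀ n y, ‖F n y‖ ≤ C * ‖y‖ := ⟨1, fun n y => by
    have hn : ‖(n + 1 : ℂ)‖ = n + 1 := by exact_mod_cast Complex.norm_natCast (n + 1)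
    have := M.norm_Rs_le (hpos n) y
    simp only [Complex.mul_im, Complex.I_im, Complex.I_re] at this
    simp only [F, smul_apply, norm_smul, norm_neg, norm_mul, Complex.norm_I, hn]
    rw [one_mul, mul_one, ← le_div_iff₀' (by positivity)]
    simpa using this⟩
  have hF : Equicontinuous ((↑) ∘ F) := ((NormedSpace.equicontinuous_TFAE F).out 3 1).mp hbound
  have hdom : ∀ u ∈ M.A.adjoint.domain, Tendsto (F · u) atTop (𝓝 u) := by
    intro u hu
    have hFu : ∀ n, F n u = u - M.Rs ((n + 1 : ℂ) * Complex.I) (M.A.adjoint ⟨u, hu⟩) := by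
      intro n
      have := M.Rs_left _ (hpos n) ⟨u, hu⟩
      rw [map_sub, map_smul] at this
      simp only [F, smul_apply]
      linear_combination (norm := module) this
    simpa [hFu] using tendsto_const_nhds.sub (M.tendsto_Rs_atTop _)
  exact (hF.isClosed_setOfPred_tendsto continuous_id).closure_subset_iff.mpr hdom
    (M.dense_dom_star x)

theorem mem_of_forall_Rs_mem {N : Submodule ℂ H} (hN : IsClosed (N : Set H)) {x : H}
    (hx : ∀ z, 0 < z.im → M.Rs z x ∈ N) : x ∈ N :=
  hN.mem_of_tendsto (M.tendsto_neg_smul_Rs x)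
    (Eventually.of_forall fun n => N.smul_mem _ (hx _ (by simp; positivity)))

theorem R_R_mem {N : Submodule ℂ H} (hN : IsClosed (N : Set H)) {x : H}
    (hx : ∀ σ, σ.im < 0 → M.R σ x ∈ N) {μ σ : ℂ} (hμ : μ.im < 0) (hσ : σ.im < 0) :
    M.R μ (M.R σ x) ∈ N :=
  apply_apply_mem_of_resolvent_identity (U := {z | z.im < 0})
    (isOpen_lt Complex.continuous_im continuous_const) (fun _ hz _ hw => M.R_sub_R hz hw)
    (fun _ hz => M.abs_im_mul_norm_R_le hz) hN hx hμ hσ hμ.ne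

theorem Rs_Rs_mem {N : Submodule ℂ H} (hN : IsClosed (N : Set H)) {x : H}
    (hx : ∀ ν, 0 < ν.im → M.Rs ν x ∈ N) {τ ν : ℂ} (hτ : 0 < τ.im) (hν : 0 < ν.im) :
    M.Rs τ (M.Rs ν x) ∈ N :=
  apply_apply_mem_of_resolvent_identity (U := {z | 0 < z.im})
    (isOpen_lt continuous_const Complex.continuous_im) (fun _ hz _ hw => M.Rs_sub_Rs hz hw)
    (fun _ hz => M.abs_im_mul_norm_Rs_le hz) hN hx hτ hν hτ.ne'

end MDO

namespace StrausSetting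

variable (M : StrausSetting H E Es)

theorem ΓR_eq {z z' : ℂ} (hz : z.im < 0) (hz' : z'.im < 0) (h : H) :
    M.ΓR z h = M.ΓR z' (h + (z - z') • M.R z h) := by
  rw [M.ΓR_spec z hz h, M.ΓR_spec z' hz']
  congr 1
  ext
  have := M.R_sub_R hz' hz h
  simp only [map_add, map_smul]
  linear_combination (norm := module) -this

theorem ΓsRs_eq {w w' : ℂ} (hw : 0 < w.im) (hw' : 0 < w'.im) (h : H) :
    M.ΓsRs w h = M.ΓsRs w' (h + (w - w') • M.Rs w h) := by
  rw [M.ΓsRs_spec w hw h, M.ΓsRs_spec w' hw']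
  congr 1
  ext
  have := M.Rs_sub_Rs hw' hw h
  simp only [map_add, map_smul]
  linear_combination (norm := module) -this

theorem adjoint_ΓR_apply {z z' : ℂ} (hz : z.im < 0) (hz' : z'.im < 0) (e : E) :
    adjoint (M.ΓR z) e =
      adjoint (M.ΓR z') e + conj (z - z') • M.Rs (conj z) (adjoint (M.ΓR z') e) := by
  refine ext_inner_right ℂ fun h => ?_
  rw [adjoint_inner_left, inner_add_left, inner_smul_left, Complex.conj_conj,
    adjoint_inner_left, ← M.adjoint_R hz, adjoint_inner_left, adjoint_inner_left,
    M.ΓR_eq hz hz', map_add, map_smul, inner_add_right, inner_smul_right]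

theorem adjoint_ΓsRs_apply {w w' : ℂ} (hw : 0 < w.im) (hw' : 0 < w'.im) (f : Es) :
    adjoint (M.ΓsRs w) f =
      adjoint (M.ΓsRs w') f + conj (w - w') • M.R (conj w) (adjoint (M.ΓsRs w') f) := by
  refine ext_inner_right ℂ fun h => ?_
  rw [adjoint_inner_left, inner_add_left, inner_smul_left, Complex.conj_conj,
    adjoint_inner_left, ← M.adjoint_Rs hw, adjoint_inner_left, adjoint_inner_left,
    M.ΓsRs_eq hw hw', map_add, map_smul, inner_add_right, inner_smul_right]

theorem sub_smul_Rs_R {z τ : ℂ} (hz : z.im < 0) (hτ : 0 < τ.im) (h : H) :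
    (z - τ) • M.Rs τ (M.R z h) =
      Complex.I • adjoint (M.ΓR (conj τ)) (M.ΓR z h) - M.Rs τ h + M.R z h := by
  have hτc : (conj τ).im < 0 := by simpa using hτ
  refine ext_inner_left ℂ fun k => ?_
  have key := M.lagrange ⟨M.R z h, M.R_mem z hz h⟩ ⟨M.R (conj τ) k, M.R_mem _ hτc k⟩
  rw [M.A_R hz, M.A_R hτc, ← M.ΓR_spec z hz, ← M.ΓR_spec _ hτc,
    ← adjoint_inner_right (M.ΓR (conj τ))] at key
  have hR : ∀ y, ⟪M.R (conj τ) k, y⟫ = ⟪k, M.Rs τ y⟫ := fun y => by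
    rw [← M.adjoint_Rs hτ, adjoint_inner_left]
  simp only [inner_add_left, inner_smul_left, Complex.conj_conj, hR, map_add, map_smul,
    inner_add_right, inner_smul_right] at key
  rw [inner_smul_right, inner_add_right, inner_sub_right, inner_smul_right]
  linear_combination key

theorem sub_smul_R_Rs {μ ν : ℂ} (hμ : μ.im < 0) (hν : 0 < ν.im) (h : H) :
    (ν - μ) • M.R μ (M.Rs ν h) =
      (-Complex.I) • adjoint (M.ΓsRs (conj μ)) (M.ΓsRs ν h) + M.Rs ν h - M.R μ h := by
  have hμc : 0 < (conj μ).im := by simpa using hμ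
  refine ext_inner_left ℂ fun k => ?_
  have key :=
    M.lagrange_star ⟨M.Rs ν h, M.Rs_mem ν hν h⟩ ⟨M.Rs (conj μ) k, M.Rs_mem _ hμc k⟩
  rw [M.A_adjoint_Rs hν, M.A_adjoint_Rs hμc, ← M.ΓsRs_spec ν hν, ← M.ΓsRs_spec _ hμc,
    ← adjoint_inner_right (M.ΓsRs (conj μ))] at key
  have hRs : ∀ y, ⟪M.Rs (conj μ) k, y⟫ = ⟪k, M.R μ y⟫ := fun y => by
    rw [← M.adjoint_R hμ, adjoint_inner_left]
  simp only [inner_add_left, inner_smul_left, Complex.conj_conj, hRs, map_add, map_smul,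
    inner_add_right, inner_smul_right] at key
  rw [inner_smul_right, inner_sub_right, inner_add_right, inner_smul_right]
  linear_combination key

theorem Rs_R_mem {N : Submodule ℂ H}
    (hΓ : ∀ z, z.im < 0 → ∀ e, adjoint (M.ΓR z) e ∈ N)
    {x : H} {τ z : ℂ} (hτ : 0 < τ.im) (hz : z.im < 0) (hRsx : M.Rs τ x ∈ N)
    (hRx : M.R z x ∈ N) : M.Rs τ (M.R z x) ∈ N := by
  have hne : z - τ ≠ 0 := sub_ne_zero.mpr fun h => by rw [h] at hz; linarith
  rw [← inv_smul_smul₀ hne (M.Rs τ _), M.sub_smul_Rs_R hz hτ]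
  exact N.smul_mem _ (N.add_mem (N.sub_mem (N.smul_mem _ (hΓ _ (by simpa using hτ) _)) hRsx) hRx)

theorem R_Rs_mem {N : Submodule ℂ H}
    (hΓs : ∀ w, 0 < w.im → ∀ f, adjoint (M.ΓsRs w) f ∈ N)
    {x : H} {μ ν : ℂ} (hμ : μ.im < 0) (hν : 0 < ν.im) (hRx : M.R μ x ∈ N)
    (hRsx : M.Rs ν x ∈ N) : M.R μ (M.Rs ν x) ∈ N := by
  have hne : ν - μ ≠ 0 := sub_ne_zero.mpr fun h => by rw [h] at hν; linarith
  rw [← inv_smul_smul₀ hne (M.R μ _), M.sub_smul_R_Rs hμ hν]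
  exact N.smul_mem _ (N.sub_mem (N.add_mem (N.smul_mem _ (hΓs _ (by simpa using hμ) _)) hRsx) hRx)

theorem R_mem_cnsSubspace_of_mem_MSet {l1 l2 μ : ℂ} {x : H} (hμ : μ.im < 0)
    (hx : x ∈ M.MSet l1 l2) : M.R μ x ∈ M.cnsSubspace l1 l2 :=
  Submodule.le_topologicalClosure _ (Submodule.subset_span (Or.inl ⟨μ, x, hμ, hx, rfl⟩))

theorem Rs_mem_cnsSubspace_of_mem_MSet {l1 l2 ν : ℂ} {x : H} (hν : 0 < ν.im)
    (hx : x ∈ M.MSet l1 l2) : M.Rs ν x ∈ M.cnsSubspace l1 l2 :=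
  Submodule.le_topologicalClosure _ (Submodule.subset_span (Or.inr ⟨ν, x, hν, hx, rfl⟩))

theorem mem_cnsSubspace_of_mem_MSet {l1 l2 : ℂ} {x : H} (hx : x ∈ M.MSet l1 l2) :
    x ∈ M.cnsSubspace l1 l2 :=
  M.mem_of_forall_Rs_mem (Submodule.isClosed_topologicalClosure _)
    fun _ hν => M.Rs_mem_cnsSubspace_of_mem_MSet hν hx

theorem adjoint_ΓR_mem_cnsSubspace {l1 l2 z : ℂ} (h1 : 0 < l1.im) (hz : z.im < 0) (e : E) :
    adjoint (M.ΓR z) e ∈ M.cnsSubspace l1 l2 := by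
  have hx : adjoint (M.ΓR (-l1)) e ∈ M.MSet l1 l2 := Or.inl ⟨e, rfl⟩
  rw [M.adjoint_ΓR_apply hz (by simpa using h1 : (-l1).im < 0)]
  exact Submodule.add_mem _ (M.mem_cnsSubspace_of_mem_MSet hx)
    (Submodule.smul_mem _ _ (M.Rs_mem_cnsSubspace_of_mem_MSet (by simpa using hz) hx))

theorem adjoint_ΓsRs_mem_cnsSubspace {l1 l2 w : ℂ} (h2 : 0 < l2.im) (hw : 0 < w.im) (f : Es) :
    adjoint (M.ΓsRs w) f ∈ M.cnsSubspace l1 l2 := by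
  have hx : adjoint (M.ΓsRs l2) f ∈ M.MSet l1 l2 := Or.inr ⟨f, rfl⟩
  rw [M.adjoint_ΓsRs_apply hw h2]
  exact Submodule.add_mem _ (M.mem_cnsSubspace_of_mem_MSet hx)
    (Submodule.smul_mem _ _ (M.R_mem_cnsSubspace_of_mem_MSet (by simpa using hw) hx))

theorem R_mem_cnsSubspace {l1 l2 μ : ℂ} (h2 : 0 < l2.im) (hμ : μ.im < 0) {y : H}
    (hy : y ∈ M.cnsSubspace l1 l2) : M.R μ y ∈ M.cnsSubspace l1 l2 := by
  refine apply_mem_of_mem_topologicalClosure_span (Submodule.isClosed_topologicalClosure _)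
    _ ?_ hy
  rintro _ (⟨σ, x, hσ, hx, rfl⟩ | ⟨ν, x, hν, hx, rfl⟩)
  · exact M.R_R_mem (Submodule.isClosed_topologicalClosure _)
      (fun _ hσ' => M.R_mem_cnsSubspace_of_mem_MSet hσ' hx) hμ hσ
  · exact M.R_Rs_mem (fun _ hw => M.adjoint_ΓsRs_mem_cnsSubspace h2 hw) hμ hν
      (M.R_mem_cnsSubspace_of_mem_MSet hμ hx) (M.Rs_mem_cnsSubspace_of_mem_MSet hν hx)

theorem Rs_mem_cnsSubspace {l1 l2 τ : ℂ} (h1 : 0 < l1.im) (hτ : 0 < τ.im) {y : H}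
    (hy : y ∈ M.cnsSubspace l1 l2) : M.Rs τ y ∈ M.cnsSubspace l1 l2 := by
  refine apply_mem_of_mem_topologicalClosure_span (Submodule.isClosed_topologicalClosure _)
    _ ?_ hy
  rintro _ (⟨σ, x, hσ, hx, rfl⟩ | ⟨ν, x, hν, hx, rfl⟩)
  · exact M.Rs_R_mem (fun _ hz => M.adjoint_ΓR_mem_cnsSubspace h1 hz) hτ hσ
      (M.Rs_mem_cnsSubspace_of_mem_MSet hτ hx) (M.R_mem_cnsSubspace_of_mem_MSet hσ hx)
  · exact M.Rs_Rs_mem (Submodule.isClosed_topologicalClosure _)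
      (fun _ hν' => M.Rs_mem_cnsSubspace_of_mem_MSet hν' hx) hτ hν

theorem MSet_subset_cnsSubspace {l1 l2 l1' l2' : ℂ} (h1 : 0 < l1.im) (h2 : 0 < l2.im)
    (h1' : 0 < l1'.im) (h2' : 0 < l2'.im) : M.MSet l1 l2 ⊆ M.cnsSubspace l1' l2' := by
  rintro _ (⟨e, rfl⟩ | ⟨f, rfl⟩)
  · exact M.adjoint_ΓR_mem_cnsSubspace h1' (by simpa using h1) e
  · exact M.adjoint_ΓsRs_mem_cnsSubspace h2' h2 f

theorem cnsSubspace_le {l1 l2 l1' l2' : ℂ} (h1 : 0 < l1.im) (h2 : 0 < l2.im)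
    (h1' : 0 < l1'.im) (h2' : 0 < l2'.im) : M.cnsSubspace l1 l2 ≤ M.cnsSubspace l1' l2' := by
  refine Submodule.topologicalClosure_minimal _ (Submodule.span_le.mpr ?_)
    (Submodule.isClosed_topologicalClosure _)
  have hM := M.MSet_subset_cnsSubspace h1 h2 h1' h2'
  rintro _ (⟨μ, x, hμ, hx, rfl⟩ | ⟨ν, x, hν, hx, rfl⟩)
  · exact M.R_mem_cnsSubspace h2' hμ (hM hx)
  · exact M.Rs_mem_cnsSubspace h1' hν (hM hx)

end StrausSetting

/-- The subspace `cnsSubspace` is independent of the choice of the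
parameters `λ', λ''` in the open upper half-plane; in particular it always equals the
subspace formed with `λ' = λ'' = i`. -/
theorem stmt17 (M : StrausSetting H E Es) (l1 l2 : ℂ)
    (h1 : 0 < l1.im) (h2 : 0 < l2.im) :
    M.cnsSubspace l1 l2 = M.cnsSubspace Complex.I Complex.I := by
  have hI : 0 < Complex.I.im := by simp
  exact le_antisymm (M.cnsSubspace_le h1 h2 hI hI) (M.cnsSubspace_le hI hI h1 h2)

end
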